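/- arXiv:1904.00262 — 3 statements merged into one kernel-verified Lean document; each statement's English description precedes it below -/
import Mathlib

section
/- (Menas, converse direction) Let ω₁ ⊆ W ⊆ W' be sets and X ⊆ [W]^ω. If the set {x' ∈ [W']^ω : x' ∩ W ∈ X} is stationary in [W']^ω, then X is stationary in [W]^ω. -/
open Set Cardinal

noncomputable def omega1 : Ordinal := (Cardinal.aleph 1).ord

noncomputable def omega2 : Ordinal := (Cardinal.aleph 2).ord

/-- `[W]^ω`: the countable subsets of `W`. -/
def ctble (W : Set Ordinal) : Set (Set Ordinal) := {x | x ⊆ W ∧ x.Countable}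

/-- `Z` is club in `[W]^ω`: `Z ⊆ [W]^ω`, `Z` is `⊆`-cofinal in `[W]^ω`, and `Z` is closed
under unions of `⊆`-increasing `ω`-chains of its elements. -/
def IsClubCtble (W : Set Ordinal) (Z : Set (Set Ordinal)) : Prop :=
  Z ⊆ ctble W ∧
  (∀ x ∈ ctble W, ∃ z ∈ Z, x ⊆ z) ∧
  (∀ c : ℕ → Set Ordinal, (∀ n, c n ∈ Z) → (∀ n, c n ⊆ c (n + 1)) → (⋃ n, c n) ∈ Z)

/-- `X` is stationary in `[W]^ω`: `X` meets every club subset of `[W]^ω`. -/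
def IsStat (W : Set Ordinal) (X : Set (Set Ordinal)) : Prop :=
  ∀ Z, IsClubCtble W Z → (X ∩ Z).Nonempty

/-- `X` is non-stationary in `[W]^ω`: `X` is disjoint from some club subset of `[W]^ω`. -/
def NonStat (W : Set Ordinal) (X : Set (Set Ordinal)) : Prop :=
  ∃ Z, IsClubCtble W Z ∧ X ∩ Z = ∅


/-! The trace map `x' ↦ x' ∩ W` pulls a club `Z` of `[W]^ω` back to a club of `[W']^ω`: any
`x' ∈ [W']^ω` lies below `z ∪ x'` for some `z ∈ Z` covering `x' ∩ W`, and the trace of `z ∪ x'`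
is `z` again; closure holds because traces commute with unions of chains. A stationary pullback
of `X` meets the pullback of `Z`, and the trace of a common point lies in `X ∩ Z`. -/

def ctblePullback (W W' : Set Ordinal) (Z : Set (Set Ordinal)) : Set (Set Ordinal) :=
  {x' | x' ∈ ctble W' ∧ x' ∩ W ∈ Z}

lemma inter_mem_ctble {W' x : Set Ordinal} (hx : x ∈ ctble W') (W : Set Ordinal) :
    x ∩ W ∈ ctble W :=
  ⟨inter_subset_right, hx.2.mono inter_subset_left⟩

lemma union_inter_eq_left {α : Type*} {z x W : Set α} (hzW : z ⊆ W) (hxz : x ∩ W ⊆ z) :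
    (z ∪ x) ∩ W = z := by
  rw [union_inter_distrib_right, inter_eq_left.mpr hzW, union_eq_left.mpr hxz]

section Pullback

variable {W W' : Set Ordinal} {Z : Set (Set Ordinal)}

lemma IsClubCtble.exists_mem_ctblePullback_superset (hZ : IsClubCtble W Z) (hWW' : W ⊆ W')
    {x : Set Ordinal} (hx : x ∈ ctble W') : ∃ y ∈ ctblePullback W W' Z, x ⊆ y := by
  obtain ⟨z, hz, hxz⟩ := hZ.2.1 _ (inter_mem_ctble hx W)
  have hzW : z ∈ ctble W := hZ.1 hz
  refine ⟨z ∪ x, ⟨⟨union_subset (hzW.1.trans hWW') hx.1, hzW.2.union hx.2⟩, ?_⟩,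
    subset_union_right⟩
  rwa [union_inter_eq_left hzW.1 hxz]

lemma IsClubCtble.iUnion_mem_ctblePullback (hZ : IsClubCtble W Z) {c : ℕ → Set Ordinal}
    (hc : ∀ n, c n ∈ ctblePullback W W' Z) (hmono : ∀ n, c n ⊆ c (n + 1)) :
    (⋃ n, c n) ∈ ctblePullback W W' Z := by
  refine ⟨⟨iUnion_subset fun n => (hc n).1.1, countable_iUnion fun n => (hc n).1.2⟩, ?_⟩
  rw [iUnion_inter]
  exact hZ.2.2 _ (fun n => (hc n).2) fun n => inter_subset_inter_left W (hmono n)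

lemma IsClubCtble.ctblePullback (hZ : IsClubCtble W Z) (hWW' : W ⊆ W') :
    IsClubCtble W' (ctblePullback W W' Z) :=
  ⟨fun _ hx => hx.1, fun _ hx => hZ.exists_mem_ctblePullback_superset hWW' hx,
    fun _ hc hmono => hZ.iUnion_mem_ctblePullback hc hmono⟩

lemma IsStat.of_ctblePullback {X : Set (Set Ordinal)} (hWW' : W ⊆ W')
    (hX : IsStat W' (ctblePullback W W' X)) : IsStat W X := by
  intro Z hZ
  obtain ⟨x', hx'X, hx'Z⟩ := hX _ (hZ.ctblePullback hWW')
  exact ⟨x' ∩ W, hx'X.2, hx'Z.2⟩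

end Pullback

theorem stmt4_general (W W' : Set Ordinal) (hWW' : W ⊆ W')
    (X : Set (Set Ordinal))
    (hstat : IsStat W' {x' | x' ∈ ctble W' ∧ x' ∩ W ∈ X}) :
    IsStat W X :=
  hstat.of_ctblePullback hWW'

theorem stmt4 (W W' : Set Ordinal) (hW : Set.Iio omega1 ⊆ W) (hWW' : W ⊆ W')
    (X : Set (Set Ordinal)) (hX : X ⊆ ctble W)
    (hstat : IsStat W' {x' | x' ∈ ctble W' ∧ x' ∩ W ∈ X}) :
    IsStat W X :=
  stmt4_general W W' hWW' X hstat
end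

section
/- Let λ ≥ ω₂, for β < λ let π_β : ω₁ → β be a surjection, and let Z be the set of x ∈ [λ]^ω with x ∩ ω₁ ∈ ω₁ and x closed under π_β for all β ∈ x. If R ∈ [λ]^{ω₁} with ω₁ ⊆ R and Z ∩ [R]^ω is ⊆-cofinal in [R]^ω, then R is an ordinal; that is, R = δ for some δ ∈ [ω₁, λ). -/
open Set Cardinal

/-!
Closure under the surjections `π β` is a condition on pairs of elements, so it passes from a
cofinal family of countable subsets of `R` to `R` itself. As `R` contains `ω₁ ⊇ dom π β`, this
makes `R` downward closed, hence an ordinal `δ`; then `|δ| = ℵ₁` forces `δ < ω₂ ≤ λ`.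
-/

def IsPiClosed (π : Ordinal → Ordinal → Ordinal) (κ : Ordinal) (x : Set Ordinal) : Prop :=
  ∀ β ∈ x, 1 ≤ β → ∀ ξ ∈ x, ξ < κ → π β ξ ∈ x

theorem isPiClosed_of_cofinal {π : Ordinal → Ordinal → Ordinal} {κ : Ordinal}
    {R : Set Ordinal} {Z : Set (Set Ordinal)} (hZ : ∀ z ∈ Z, IsPiClosed π κ z)
    (hcof : ∀ x ∈ ctble R, ∃ z ∈ Z, z ⊆ R ∧ x ⊆ z) : IsPiClosed π κ R := by
  intro β hβ hβ1 ξ hξ hξκ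
  have hpair : ({β, ξ} : Set Ordinal) ∈ ctble R :=
    ⟨insert_subset hβ (singleton_subset_iff.2 hξ), (countable_singleton ξ).insert β⟩
  obtain ⟨z, hzZ, hzR, hpz⟩ := hcof _ hpair
  exact hzR (hZ z hzZ β (hpz (mem_insert β _)) hβ1 ξ (hpz (mem_insert_of_mem β rfl)) hξκ)

theorem IsPiClosed.isLowerSet {π : Ordinal → Ordinal → Ordinal} {κ : Ordinal}
    {R : Set Ordinal} (hR : IsPiClosed π κ R) (hκR : Iio κ ⊆ R)
    (hsurj : ∀ β ∈ R, 1 ≤ β → ∀ γ < β, ∃ ξ < κ, π β ξ = γ) : IsLowerSet R := by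
  intro β γ hγβ hβ
  rcases hγβ.eq_or_lt with rfl | hγβ
  · exact hβ
  have hβ1 : 1 ≤ β := Order.one_le_iff_pos.2 ((zero_le (a := γ)).trans_lt hγβ)
  obtain ⟨ξ, hξκ, rfl⟩ := hsurj β hβ hβ1 γ hγβ
  exact hR β hβ hβ1 ξ (hκR hξκ) hξκ

theorem lt_omega2_of_mk_Iio_eq_aleph_one {δ : Ordinal} (h : #(Iio δ) = ℵ_ 1) :
    δ < omega2 := by
  rw [Cardinal.mk_Iio_ordinal, lift_eq_aleph_one] at h
  rw [omega2, Cardinal.lt_ord, h]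
  exact aleph_lt_aleph.2 one_lt_two

theorem stmt13 (L : Ordinal) (hL : omega2 ≤ L)
    (π : Ordinal → Ordinal → Ordinal)
    (hπ : ∀ β, 1 ≤ β → β < L →
      (∀ ξ, ξ < omega1 → π β ξ < β) ∧ (∀ γ, γ < β → ∃ ξ, ξ < omega1 ∧ π β ξ = γ))
    (Z : Set (Set Ordinal))
    (hZ : Z = {x | x ∈ ctble (Set.Iio L) ∧
        (∃ η, η < omega1 ∧ x ∩ Set.Iio omega1 = Set.Iio η) ∧
        (∀ β ∈ x, 1 ≤ β → ∀ ξ ∈ x, ξ < omega1 → π β ξ ∈ x)})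
    (R : Set Ordinal) (hR1 : R ⊆ Set.Iio L) (hR2 : Set.Iio omega1 ⊆ R)
    (hR3 : Cardinal.mk R = Cardinal.aleph 1)
    (hcof : ∀ x ∈ ctble R, ∃ z ∈ Z, z ⊆ R ∧ x ⊆ z) :
    ∃ δ, omega1 ≤ δ ∧ δ < L ∧ R = Set.Iio δ := by
  have hclosed : IsPiClosed π omega1 R :=
    isPiClosed_of_cofinal (fun z hz ↦ by rw [hZ] at hz; exact hz.2.2) hcof
  have hlower : IsLowerSet R :=
    hclosed.isLowerSet hR2 fun β hβ hβ1 ↦ (hπ β hβ1 (hR1 hβ)).2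
  obtain ⟨δ, rfl⟩ := hlower.eq_univ_or_Iio.resolve_left fun h ↦ lt_irrefl L (hR1 (h ▸ mem_univ L))
  exact ⟨δ, Iio_subset_Iio_iff.1 hR2, (lt_omega2_of_mk_Iio_eq_aleph_one hR3).trans_le hL, rfl⟩
end

section
/- Assume DRP at [ω₂]^ω: for any sequence ⟨X_α : α < ω₂⟩ of stationary subsets of [ω₂]^ω there is R ∈ [ω₂]^{ω₁} with ω₁ ⊆ R such that X_α ∩ [R]^ω is stationary in [R]^ω for all α ∈ R. Then for any sequence ⟨X_α : α < ω₂⟩ of stationary subsets of [ω₂]^ω there is an ordinal δ with ω₁ ≤ δ < ω₂ such that X_α ∩ [δ]^ω is stationary in [δ]^ω for all α < δ. -/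
/-!
Fix surjections `π β : ω₁ → β + 1` for `β < ω₂`. Intersecting each `X α` with the club of
countable sets closed under `(β, ξ) ↦ π β ξ` keeps it stationary, and DRP applied to the new
sequence yields `R ⊇ ω₁` in which `π`-closed sets are cofinal. Any `γ ≤ β ∈ R` is `π β ξ` for
some `ξ < ω₁ ⊆ R`, so it lies in a `π`-closed `x ⊆ R` containing `β` and `ξ`: thus `R` is an
ordinal `δ`, and `|R| = ℵ₁` gives `ω₁ ≤ δ < ω₂`.

DRP quantifies over ordinals of one universe and the sequence lives in another; the ordinals
below `ω₂` of the two universes are matched through `Ordinal.lift`, and stationarity is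
preserved by injective images.
-/

open Set Cardinal

theorem Monotone.image2_iUnion_subset {α β : Type*} {c : ℕ → Set α} (hc : Monotone c)
    (f : α → α → β) {s : Set β} (h : ∀ n, image2 f (c n) (c n) ⊆ s) :
    image2 f (⋃ n, c n) (⋃ n, c n) ⊆ s := by
  rintro _ ⟨β, hβ, ξ, hξ, rfl⟩
  obtain ⟨m, hm⟩ := mem_iUnion.1 hβ
  obtain ⟨n, hn⟩ := mem_iUnion.1 hξ
  exact h (max m n) (mem_image2_of_mem (hc (le_max_left m n) hm) (hc (le_max_right m n) hn))

section Club

variable {W : Set Ordinal} {X Y Z Z₁ Z₂ : Set (Set Ordinal)}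

theorem iUnion_mem_ctble {c : ℕ → Set Ordinal} (hc : ∀ n, c n ∈ ctble W) :
    ⋃ n, c n ∈ ctble W :=
  ⟨iUnion_subset fun n => (hc n).1, countable_iUnion fun n => (hc n).2⟩

theorem image_mem_ctble {g : Ordinal.{u} → Ordinal.{v}} {x : Set Ordinal.{u}}
    (hx : x ∈ ctble W) : g '' x ∈ ctble (g '' W) :=
  ⟨image_mono hx.1, hx.2.image g⟩

theorem IsClubCtble.iUnion_mem (hZ : IsClubCtble W Z) {c : ℕ → Set Ordinal}
    (hc : ∀ n, c n ∈ Z) (hmono : Monotone c) : ⋃ n, c n ∈ Z :=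
  hZ.2.2 c hc fun n => hmono n.le_succ

theorem IsClubCtble.exists_extend (hZ : IsClubCtble W Z) :
    ∃ F : Set Ordinal → Set Ordinal, ∀ x ∈ ctble W, F x ∈ Z ∧ x ⊆ F x := by
  choose! F hF using hZ.2.1
  exact ⟨F, hF⟩

theorem isClubCtble_superset {a : Set Ordinal} (ha : a ∈ ctble W) :
    IsClubCtble W {x | x ∈ ctble W ∧ a ⊆ x} :=
  ⟨fun _ hx => hx.1,
    fun x hx => ⟨x ∪ a, ⟨⟨union_subset hx.1 ha.1, hx.2.union ha.2⟩, subset_union_right⟩,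
      subset_union_left⟩,
    fun c hc _ => ⟨iUnion_mem_ctble fun n => (hc n).1, (hc 0).2.trans (subset_iUnion c 0)⟩⟩

theorem IsClubCtble.inter (h₁ : IsClubCtble W Z₁) (h₂ : IsClubCtble W Z₂) :
    IsClubCtble W (Z₁ ∩ Z₂) := by
  refine ⟨fun x hx => h₁.1 hx.1, fun x hx => ?_, fun c hc hmono =>
    ⟨h₁.2.2 c (fun n => (hc n).1) hmono, h₂.2.2 c (fun n => (hc n).2) hmono⟩⟩
  obtain ⟨F₁, hF₁⟩ := h₁.exists_extend
  obtain ⟨F₂, hF₂⟩ := h₂.exists_extend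
  -- Alternate between the two clubs: `d n ⊆ F₂ (d n) ⊆ d (n + 1)`, so both chains have one union.
  set d : ℕ → Set Ordinal := fun n => (F₁ ∘ F₂)^[n] (F₁ x)
  have hd_succ : ∀ n, d (n + 1) = F₁ (F₂ (d n)) := fun n =>
    Function.iterate_succ_apply' (F₁ ∘ F₂) n (F₁ x)
  have hd : ∀ n, d n ∈ Z₁ := by
    intro n
    induction n with
    | zero => exact (hF₁ x hx).1
    | succ n ih => rw [hd_succ]; exact (hF₁ _ (h₂.1 (hF₂ _ (h₁.1 ih)).1)).1
  have he : ∀ n, F₂ (d n) ∈ Z₂ ∧ d n ⊆ F₂ (d n) := fun n => hF₂ _ (h₁.1 (hd n))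
  have hed : ∀ n, F₂ (d n) ⊆ d (n + 1) := fun n => by
    rw [hd_succ]; exact (hF₁ _ (h₂.1 (he n).1)).2
  have hunion : ⋃ n, d n = ⋃ n, F₂ (d n) :=
    (iUnion_mono fun n => (he n).2).antisymm
      (iUnion_subset fun n => (hed n).trans (subset_iUnion d (n + 1)))
  have hd_mono : Monotone d := monotone_nat_of_le_succ fun n => (he n).2.trans (hed n)
  have he_mono : Monotone (F₂ ∘ d) := monotone_nat_of_le_succ fun n => (hed n).trans (he (n + 1)).2
  refine ⟨⋃ n, d n, ⟨h₁.iUnion_mem hd hd_mono, hunion ▸ h₂.iUnion_mem (fun n => (he n).1) he_mono⟩,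
    (hF₁ x hx).2.trans (subset_iUnion d 0)⟩

theorem isClubCtble_closedUnder (f : Ordinal → Ordinal → Ordinal)
    (hf : ∀ β ∈ W, ∀ ξ ∈ W, f β ξ ∈ W) :
    IsClubCtble W {x | x ∈ ctble W ∧ image2 f x x ⊆ x} := by
  refine ⟨fun _ hx => hx.1, fun x hx => ?_, fun c hc hmono => ⟨iUnion_mem_ctble fun n => (hc n).1,
    (monotone_nat_of_le_succ hmono).image2_iUnion_subset f fun n =>
      (hc n).2.trans (subset_iUnion c n)⟩⟩
  set c : ℕ → Set Ordinal := fun n => (fun y => y ∪ image2 f y y)^[n] x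
  have hc_succ : ∀ n, c (n + 1) = c n ∪ image2 f (c n) (c n) := fun n =>
    Function.iterate_succ_apply' _ n x
  have hc : ∀ n, c n ∈ ctble W := by
    intro n
    induction n with
    | zero => exact hx
    | succ n ih =>
      rw [hc_succ]
      refine ⟨union_subset ih.1 ?_, ih.2.union (ih.2.image2 ih.2 f)⟩
      rintro _ ⟨β, hβ, ξ, hξ, rfl⟩
      exact hf β (ih.1 hβ) ξ (ih.1 hξ)
  have hmono : Monotone c := monotone_nat_of_le_succ fun n => by
    rw [hc_succ]; exact subset_union_left
  refine ⟨⋃ n, c n, ⟨iUnion_mem_ctble hc, hmono.image2_iUnion_subset f fun n => ?_⟩,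
    subset_iUnion c 0⟩
  exact (subset_union_right.trans (hc_succ n).symm.subset).trans (subset_iUnion c (n + 1))

theorem IsStat.mono (hXY : X ⊆ Y) (hX : IsStat W X) : IsStat W Y := fun Z hZ =>
  (hX Z hZ).mono (inter_subset_inter_left _ hXY)

theorem IsStat.inter_club (hX : IsStat W X) (hZ : IsClubCtble W Z) : IsStat W (X ∩ Z) :=
  fun _ hZ' => (hX _ (hZ.inter hZ')).mono fun _ hx => ⟨⟨hx.1, hx.2.1⟩, hx.2.2⟩

theorem IsStat.exists_superset (hX : IsStat W X) {a : Set Ordinal} (ha : a ∈ ctble W) :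
    ∃ x ∈ X, a ⊆ x :=
  let ⟨x, hxX, _, hax⟩ := hX _ (isClubCtble_superset ha)
  ⟨x, hxX, hax⟩

theorem IsStat.image {g : Ordinal.{u} → Ordinal.{v}} (hg : InjOn g W) (hX : IsStat W X) :
    IsStat (g '' W) ((g '' ·) '' X) := by
  intro Z' hZ'
  have hZ : IsClubCtble W {x | x ∈ ctble W ∧ g '' x ∈ Z'} := by
    refine ⟨fun _ hx => hx.1, fun x hx => ?_, fun c hc hmono =>
      ⟨iUnion_mem_ctble fun n => (hc n).1, ?_⟩⟩
    · obtain ⟨z', hz'Z', hxz'⟩ := hZ'.2.1 _ (image_mem_ctble hx)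
      have hz' : g '' (W ∩ g ⁻¹' z') = z' := by
        rw [image_inter_preimage, inter_eq_right]; exact (hZ'.1 hz'Z').1
      refine ⟨W ∩ g ⁻¹' z', ⟨⟨inter_subset_left, ?_⟩, by rwa [hz']⟩,
        subset_inter hx.1 (image_subset_iff.1 hxz')⟩
      exact MapsTo.countable_of_injOn (f := g) (fun _ h => h.2) (hg.mono inter_subset_left)
        (hZ'.1 hz'Z').2
    · rw [image_iUnion]
      exact hZ'.2.2 _ (fun n => (hc n).2) fun n => image_mono (hmono n)
  obtain ⟨x, hxX, hxZ⟩ := hX _ hZ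
  exact ⟨g '' x, mem_image_of_mem _ hxX, hxZ.2⟩

end Club

theorem omega1_pos : 0 < omega1 := by
  rw [omega1, lt_ord, Ordinal.card_zero]
  exact aleph_pos 1

theorem lift_omega1 : Ordinal.lift.{u} omega1.{v} = omega1 := by
  simp [omega1]

theorem lift_omega2 : Ordinal.lift.{u} omega2.{v} = omega2 := by
  simp [omega2]

theorem card_le_aleph_one_of_lt_omega2 {β : Ordinal} (hβ : β < omega2) : β.card ≤ ℵ₁ := by
  rw [← Order.lt_succ_iff, succ_aleph, one_add_one_eq_two, ← lt_ord]
  exact hβ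

theorem exists_surjOn_Iic {β : Ordinal.{u}} (hβ : β < omega2) :
    ∃ p : Ordinal.{u} → Ordinal.{u}, (∀ ξ, p ξ ≤ β) ∧ SurjOn p (Iio omega1) (Iic β) := by
  have hcard : #(Iic β) ≤ #(Iio omega1) := by
    rw [← Order.Iio_succ, mk_Iio_ordinal, mk_Iio_ordinal, lift_le, omega1, card_ord]
    exact card_le_aleph_one_of_lt_omega2 ((isSuccLimit_ord (aleph0_le_aleph 2)).succ_lt hβ)
  obtain ⟨e⟩ := hcard
  have : Nonempty (Iic β) := ⟨⟨β, (le_rfl : β ≤ β)⟩⟩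
  refine ⟨fun ξ => if h : ξ < omega1 then (Function.invFun e ⟨ξ, h⟩ : Iic β) else β,
    fun ξ => ?_, fun γ hγ => ?_⟩
  · dsimp only
    split_ifs
    exacts [(Function.invFun e _).2, le_rfl]
  · obtain ⟨⟨ξ, hξ⟩, hξγ⟩ := Function.invFun_surjective e.injective ⟨γ, hγ⟩
    exact ⟨ξ, hξ, by simp [show ξ < omega1 from hξ, hξγ]⟩

theorem isLowerSet_of_closedUnder_cofinal {R : Set Ordinal} {π : Ordinal → Ordinal → Ordinal}
    (hπ : ∀ β ∈ R, SurjOn (π β) (Iio omega1) (Iic β)) (hω₁R : Iio omega1 ⊆ R)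
    (hR : ∀ a ∈ ctble R, ∃ x ⊆ R, a ⊆ x ∧ image2 π x x ⊆ x) : IsLowerSet R := by
  intro β γ hγβ hβ
  obtain ⟨ξ, hξ, rfl⟩ := hπ β hβ hγβ
  obtain ⟨x, hxR, hβξ, hx⟩ := hR {β, ξ} ⟨pair_subset hβ (hω₁R hξ), (countable_singleton ξ).insert β⟩
  exact hxR (hx (mem_image2_of_mem (hβξ (mem_insert β _)) (hβξ (mem_insert_of_mem β rfl))))

theorem exists_eq_Iio_of_isLowerSet {R : Set Ordinal} (hR : IsLowerSet R)
    (hRω₂ : R ⊆ Iio omega2) (hω₁R : Iio omega1 ⊆ R) (hcard : #R = ℵ₁) :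
    ∃ δ, omega1 ≤ δ ∧ δ < omega2 ∧ R = Iio δ := by
  obtain rfl | ⟨δ, rfl⟩ := hR.eq_univ_or_Iio
  · exact absurd (hRω₂ (mem_univ omega2)) (lt_irrefl omega2)
  · rw [mk_Iio_ordinal, lift_eq_aleph_one] at hcard
    refine ⟨δ, Iio_subset_Iio_iff.1 hω₁R, ?_, rfl⟩
    rw [omega2, lt_ord, hcard]
    exact aleph_lt_aleph.2 one_lt_two

def IsStationarySeq (X : Ordinal → Set (Set Ordinal)) : Prop :=
  ∀ α, α < omega2 → X α ⊆ ctble (Iio omega2) ∧ IsStat (Iio omega2) (X α)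

def IsReflectionPoint (X : Ordinal → Set (Set Ordinal)) (δ : Ordinal) : Prop :=
  omega1 ≤ δ ∧ δ < omega2 ∧ ∀ α, α < δ → IsStat (Iio δ) (X α ∩ {x | x ⊆ Iio δ})

theorem exists_isReflectionPoint_of_drp
    (DRP : ∀ X : Ordinal.{u} → Set (Set Ordinal.{u}), IsStationarySeq X →
      ∃ R : Set Ordinal, R ⊆ Iio omega2 ∧ Iio omega1 ⊆ R ∧ #R = ℵ₁ ∧
        ∀ α ∈ R, IsStat R (X α ∩ {x | x ⊆ R}))
    (X : Ordinal.{u} → Set (Set Ordinal.{u})) (hX : IsStationarySeq X) :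
    ∃ δ, IsReflectionPoint X δ := by
  choose! π hπ using fun β (hβ : β < omega2) => exists_surjOn_Iic hβ
  set Z := {x | x ∈ ctble (Iio omega2) ∧ image2 π x x ⊆ x}
  have hZ : IsClubCtble (Iio omega2) Z :=
    isClubCtble_closedUnder π fun β hβ ξ _ => ((hπ β hβ).1 ξ).trans_lt hβ
  obtain ⟨R, hRω₂, hω₁R, hRcard, hRstat⟩ := DRP (fun α => X α ∩ Z) fun α hα =>
    ⟨inter_subset_left.trans (hX α hα).1, (hX α hα).2.inter_club hZ⟩
  have hR : IsLowerSet R := by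
    refine isLowerSet_of_closedUnder_cofinal (fun β hβ => (hπ β (hRω₂ hβ)).2) hω₁R fun a ha => ?_
    obtain ⟨x, ⟨⟨-, -, hx⟩, hxR⟩, hax⟩ := (hRstat 0 (hω₁R omega1_pos)).exists_superset ha
    exact ⟨x, hxR, hax, hx⟩
  obtain ⟨δ, hω₁δ, hδω₂, rfl⟩ := exists_eq_Iio_of_isLowerSet hR hRω₂ hω₁R hRcard
  exact ⟨δ, hω₁δ, hδω₂, fun α hα => (hRstat α hα).mono fun x hx => ⟨hx.1.1, hx.2⟩⟩

def LiftEqBelowOmega2 (g : Ordinal.{u} → Ordinal.{v}) : Prop :=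
  ∀ o < omega2, Ordinal.lift.{u} (g o) = Ordinal.lift.{v} o

theorem exists_liftEqBelowOmega2 : ∃ g : Ordinal.{u} → Ordinal.{v}, LiftEqBelowOmega2 g := by
  choose! g hg using fun (o : Ordinal.{u}) (ho : o < omega2) =>
    Ordinal.mem_range_lift_of_le.{v, u} (a := omega2)
      ((Ordinal.lift_lt.{v}.2 ho).le.trans_eq (by rw [lift_omega2, lift_omega2]))
  exact ⟨g, hg⟩

namespace LiftEqBelowOmega2

variable {g : Ordinal.{u} → Ordinal.{v}} {g' : Ordinal.{v} → Ordinal.{u}}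

theorem lt_iff (hg : LiftEqBelowOmega2 g) {o c : Ordinal.{u}} {c' : Ordinal.{v}}
    (ho : o < omega2) (hc : Ordinal.lift.{u} c' = Ordinal.lift.{v} c) : g o < c' ↔ o < c := by
  rw [← Ordinal.lift_lt.{u}, hg o ho, hc, Ordinal.lift_lt]

theorem lt_omega2 (hg : LiftEqBelowOmega2 g) {o : Ordinal.{u}} (ho : o < omega2) :
    g o < omega2 :=
  (hg.lt_iff ho (by rw [lift_omega2, lift_omega2])).2 ho

theorem leftInvOn (hg : LiftEqBelowOmega2 g) (hg' : LiftEqBelowOmega2 g') :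
    LeftInvOn g' g (Iio omega2) := fun o ho => by
  rw [← Ordinal.lift_inj.{v}, hg' _ (hg.lt_omega2 ho), hg o ho]

theorem image_Iio (hg : LiftEqBelowOmega2 g) (hg' : LiftEqBelowOmega2 g') {δ : Ordinal.{u}}
    {δ' : Ordinal.{v}} (hδ : δ ≤ omega2) (hδ' : Ordinal.lift.{u} δ' = Ordinal.lift.{v} δ) :
    g '' Iio δ = Iio δ' := by
  have hδ'ω₂ : δ' ≤ omega2 := by
    rw [← Ordinal.lift_le.{u}, hδ', lift_omega2, ← lift_omega2.{v, u}, Ordinal.lift_le]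
    exact hδ
  ext o'
  constructor
  · rintro ⟨o, ho, rfl⟩
    exact (hg.lt_iff (lt_of_lt_of_le ho hδ) hδ').2 ho
  · intro ho'
    have ho'ω₂ : o' < omega2 := lt_of_lt_of_le ho' hδ'ω₂
    exact ⟨g' o', (hg'.lt_iff ho'ω₂ hδ'.symm).2 ho', hg'.leftInvOn hg ho'ω₂⟩

end LiftEqBelowOmega2

section UniverseTransfer

variable {X : Ordinal.{v} → Set (Set Ordinal.{v})} {g : Ordinal.{v} → Ordinal.{u}}
  {g' : Ordinal.{u} → Ordinal.{v}}

theorem IsStationarySeq.image (hX : IsStationarySeq X) (hg : LiftEqBelowOmega2 g)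
    (hg' : LiftEqBelowOmega2 g') : IsStationarySeq fun α => (g '' ·) '' X (g' α) := by
  intro α hα
  have hgW : g '' Iio omega2 = Iio omega2 :=
    hg.image_Iio hg' le_rfl (by rw [lift_omega2, lift_omega2])
  obtain ⟨hXα, hstat⟩ := hX _ (hg'.lt_omega2 hα)
  refine ⟨?_, hgW ▸ hstat.image (hg.leftInvOn hg').injOn⟩
  rintro _ ⟨x, hx, rfl⟩
  rw [← hgW]
  exact image_mem_ctble (hXα hx)

theorem IsReflectionPoint.of_image (hX : IsStationarySeq X) (hg : LiftEqBelowOmega2 g)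
    (hg' : LiftEqBelowOmega2 g') {δ : Ordinal.{u}}
    (hδ : IsReflectionPoint (fun α => (g '' ·) '' X (g' α)) δ) : IsReflectionPoint X (g' δ) := by
  obtain ⟨hω₁δ, hδω₂, hδ⟩ := hδ
  have hω₁ : Ordinal.lift.{v} omega1.{u} = Ordinal.lift.{u} omega1.{v} := by
    rw [lift_omega1, lift_omega1]
  refine ⟨not_lt.1 fun h => ((hg'.lt_iff hδω₂ hω₁.symm).1 h).not_ge hω₁δ, hg'.lt_omega2 hδω₂,
    fun α hα => ?_⟩
  have hαω₂ : α < omega2 := hα.trans (hg'.lt_omega2 hδω₂)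
  have hgα : g α < δ := (hg.lt_iff hαω₂ (hg' δ hδω₂).symm).2 hα
  have hstat := (hδ (g α) hgα).image
    ((hg'.leftInvOn hg).injOn.mono (Iio_subset_Iio hδω₂.le))
  rw [hg'.image_Iio hg hδω₂.le (hg' δ hδω₂)] at hstat
  refine hstat.mono ?_
  rintro _ ⟨_, ⟨⟨x, hx, rfl⟩, hxδ⟩, rfl⟩
  rw [hg.leftInvOn hg' hαω₂] at hx
  dsimp only
  refine ⟨?_, ?_⟩
  · rwa [((hg.leftInvOn hg').mono ((hX α hαω₂).1 hx).1).image_image]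
  · rw [← hg'.image_Iio hg hδω₂.le (hg' δ hδω₂)]
    exact image_mono hxδ

theorem exists_isReflectionPoint_of_forall
    (h : ∀ Y : Ordinal.{u} → Set (Set Ordinal.{u}), IsStationarySeq Y → ∃ δ, IsReflectionPoint Y δ)
    (hX : IsStationarySeq X) : ∃ δ, IsReflectionPoint X δ := by
  obtain ⟨g, hg⟩ := exists_liftEqBelowOmega2.{v, u}
  obtain ⟨g', hg'⟩ := exists_liftEqBelowOmega2.{u, v}
  obtain ⟨δ, hδ⟩ := h _ (hX.image hg hg')
  exact ⟨g' δ, hδ.of_image hX hg hg'⟩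

end UniverseTransfer

theorem stmt14
    (DRP : ∀ X : Ordinal → Set (Set Ordinal),
      (∀ α, α < omega2 → X α ⊆ ctble (Set.Iio omega2) ∧
        IsStat (Set.Iio omega2) (X α)) →
      ∃ R : Set Ordinal, R ⊆ Set.Iio omega2 ∧ Set.Iio omega1 ⊆ R ∧
        Cardinal.mk R = Cardinal.aleph 1 ∧
        ∀ α ∈ R, IsStat R (X α ∩ {x | x ⊆ R}))
    (X : Ordinal → Set (Set Ordinal))
    (hX : ∀ α, α < omega2 → X α ⊆ ctble (Set.Iio omega2) ∧
      IsStat (Set.Iio omega2) (X α)) :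
    ∃ δ, omega1 ≤ δ ∧ δ < omega2 ∧
      ∀ α, α < δ → IsStat (Set.Iio δ) (X α ∩ {x | x ⊆ Set.Iio δ}) :=
  exists_isReflectionPoint_of_forall (exists_isReflectionPoint_of_drp DRP) hX
end
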